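/- arXiv:1812.00801 — 4 statements merged into one kernel-verified Lean document; each statement's English description precedes it below -/
import Mathlib

section
/- Let (B,X,⊲,⊲',*) be a shadow biquandle such that X is strongly connected, and define [x,y,z] = y*((x↘z) ⊲' (x↘y)) for x,y,z∈X. Then for any x,y,w∈X there exists a unique z∈X such that [x,y,z] = w. -/
/-- A biquandle: a set `B` with two binary operations `ut` (the under operation `⊲`)
and `ot` (the over operation `⊲'`) satisfying the biquandle axioms. -/
structure Biquandle (B : Type*) where
  ut : B → B → B
  ot : B → B → B
  diag : ∀ a, ut a a = ot a a
  ut_bij : ∀ b, Function.Bijective fun a => ut a b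
  ot_bij : ∀ b, Function.Bijective fun a => ot a b
  S_bij : Function.Bijective fun p : B × B => (ot p.2 p.1, ut p.1 p.2)
  ex1 : ∀ a b c, ut (ut a b) (ut c b) = ut (ut a c) (ot b c)
  ex2 : ∀ a b c, ot (ut a b) (ut c b) = ut (ot a c) (ot b c)
  ex3 : ∀ a b c, ot (ot a b) (ot c b) = ot (ot a c) (ut b c)

/-- The inverse `a ⊲⁻¹ b` of the bijection `·⊲b` of a biquandle. -/
noncomputable def Biquandle.utInv {B : Type*} (bq : Biquandle B) (a b : B) : B :=
  (Equiv.ofBijective _ (bq.ut_bij b)).symm a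

/-- The inverse `a ⊲'⁻¹ b` of the bijection `·⊲'b` of a biquandle. -/
noncomputable def Biquandle.otInv {B : Type*} (bq : Biquandle B) (a b : B) : B :=
  (Equiv.ofBijective _ (bq.ot_bij b)).symm a

/-- A `B`-set for a biquandle `bq` on `B`: a set `X` with an action `act = *`
such that each `·*a` is a bijection of `X` and `(x*a)*(b⊲'a) = (x*b)*(a⊲b)`. -/
structure BSet {B : Type*} (bq : Biquandle B) (X : Type*) where
  act : X → B → X
  act_bij : ∀ a, Function.Bijective fun x => act x a
  compat : ∀ x a b, act (act x a) (bq.ot b a) = act (act x b) (bq.ut a b)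

/-- The inverse `x *⁻¹ a` of the bijection `·*a` of a `B`-set. -/
noncomputable def BSet.actInv {B : Type*} {bq : Biquandle B} {X : Type*}
    (bs : BSet bq X) (x : X) (a : B) : X :=
  (Equiv.ofBijective _ (bs.act_bij a)).symm x

/-- A `B`-set is strongly connected if for each `x` the map `a ↦ x*a` is a bijection `B → X`. -/
def BSet.StronglyConnected {B : Type*} {bq : Biquandle B} {X : Type*} (bs : BSet bq X) : Prop :=
  ∀ x, Function.Bijective fun a => bs.act x a

/-- For a strongly connected `B`-set, `x ↘ y` is the unique `a ∈ B` with `x*a = y`. -/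
noncomputable def BSet.sd {B : Type*} {bq : Biquandle B} {X : Type*} (bs : BSet bq X)
    (h : bs.StronglyConnected) (x y : X) : B :=
  (Equiv.ofBijective _ (h x)).symm y

/-- The corresponding horizontal-tribracket of a shadow biquandle with strongly connected
`B`-set: `[x,y,z] = y*((x↘z) ⊲' (x↘y))`. -/
noncomputable def BSet.tribr {B X : Type*} {bq : Biquandle B} (bs : BSet bq X)
    (h : bs.StronglyConnected) (x y z : X) : X :=
  bs.act y (bq.ot (bs.sd h x z) (bs.sd h x y))

namespace BSet

variable {B X : Type*} {bq : Biquandle B} (bs : BSet bq X) (h : bs.StronglyConnected)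

theorem sd_bijective (x : X) : Function.Bijective (bs.sd h x) :=
  (Equiv.ofBijective _ (h x)).symm.bijective

theorem tribr_bijective (x y : X) : Function.Bijective (bs.tribr h x y) :=
  (h y).comp ((bq.ot_bij _).comp (bs.sd_bijective h x))

end BSet

/-- Theorem 4.1, axiom (H1)(i): for the corresponding tribracket
`[x,y,z] = y*((x↘z) ⊲' (x↘y))` of a shadow biquandle with strongly connected `X`,
for any `x y w ∈ X` there is a unique `z ∈ X` with `[x,y,z] = w`. -/
theorem shadow_biquandle_tribracket_H1i {B X : Type*} (bq : Biquandle B)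
    (bs : BSet bq X) (h : bs.StronglyConnected) :
    ∀ x y w : X, ∃! z : X, bs.tribr h x y z = w := by
  exact fun x y w => (bs.tribr_bijective h x y).existsUnique w
end

section
/- Let (B,X,⊲,⊲',*) be a shadow biquandle such that X is strongly connected, and define [x,y,z] = y*((x↘z) ⊲' (x↘y)) for x,y,z∈X. Then for any x,z,w∈X there exists a unique y∈X such that [x,y,z] = w. -/
namespace BSet

variable {B X : Type*} {bq : Biquandle B} (bs : BSet bq X) (h : bs.StronglyConnected)

theorem act_sd (x y : X) : bs.act x (bs.sd h x y) = y :=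
  (Equiv.ofBijective _ (h x)).apply_symm_apply y

theorem tribr_eq_act_ut (x y z : X) :
    bs.tribr h x y z = bs.act z (bq.ut (bs.sd h x y) (bs.sd h x z)) := by
  have hcompat := bs.compat x (bs.sd h x y) (bs.sd h x z)
  rwa [act_sd, act_sd] at hcompat

theorem tribr_bijective_middle (x z : X) : Function.Bijective fun y => bs.tribr h x y z := by
  have hfactor : (fun y => bs.tribr h x y z) =
      (fun b => bs.act z b) ∘ (fun a => bq.ut a (bs.sd h x z)) ∘ bs.sd h x :=
    funext fun y => bs.tribr_eq_act_ut h x y z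
  rw [hfactor]
  exact (h z).comp ((bq.ut_bij _).comp (bs.sd_bijective h x))

end BSet

/-- Theorem 4.1, axiom (H1)(ii): for the corresponding tribracket
`[x,y,z] = y*((x↘z) ⊲' (x↘y))` of a shadow biquandle with strongly connected `X`,
for any `x z w ∈ X` there is a unique `y ∈ X` with `[x,y,z] = w`. -/
theorem shadow_biquandle_tribracket_H1ii {B X : Type*} (bq : Biquandle B)
    (bs : BSet bq X) (h : bs.StronglyConnected) :
    ∀ x z w : X, ∃! y : X, bs.tribr h x y z = w :=
  fun x z w => (bs.tribr_bijective_middle h x z).existsUnique w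
end

section
/- Let (B,X,⊲,⊲',*) be a shadow biquandle such that X is strongly connected, let [x,y,z] = y*((x↘z) ⊲' (x↘y)) be the corresponding horizontal-tribracket, and let n≥2. Let C_n^sb be the free abelian group on X×Bⁿ with boundary ∂_n^sb(x,a₁,…,a_n) = Σ_{i=1}^{n} (−1)^i [ (x,a₁,…,a_{i−1},a_{i+1},…,a_n) − (x*a_i, a₁⊲a_i,…,a_{i−1}⊲a_i, a_{i+1}⊲'a_i,…,a_n⊲'a_i) ], and let C_n^lb be the free abelian group on X×Xⁿ with boundary ∂_n^lb(x,y₁,…,y_n) = Σ_{i=1}^{n} (−1)^i [ (x,y₁,…,y_{i−1},y_{i+1},…,y_n) − (y_i, [x,y₁,y_i],…,[x,y_{i−1},y_i], [x,y_i,y_{i+1}],…,[x,y_i,y_n]) ]. Let μ_n : C_n^sb → C_n^lb be the homomorphism induced by μ_n(x,a₁,…,a_n) = (x, x*a₁,…,x*a_n) on generators. Then μ_{n−1}∘∂_n^sb = ∂_n^lb∘μ_n. -/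
/-- Deletion of the `i`-th entry of an `n`-tuple. -/
def delTuple {α : Type*} {n : ℕ} (i : Fin n) (f : Fin n → α) : Fin (n - 1) → α :=
  fun j =>
    if h : (j : ℕ) < (i : ℕ) then f ⟨j, by have := i.isLt; omega⟩
    else f ⟨(j : ℕ) + 1, by have := j.isLt; omega⟩

/-- The twisted tuple `(a₁⊲a_i, …, a_{i-1}⊲a_i, a_{i+1}⊲'a_i, …, a_n⊲'a_i)` appearing in
the shadow biquandle boundary. -/
def sbTwist {B : Type*} (bq : Biquandle B) {n : ℕ} (f : Fin n → B) (i : Fin n) :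
    Fin (n - 1) → B :=
  fun j =>
    if h : (j : ℕ) < (i : ℕ) then bq.ut (f ⟨j, by have := i.isLt; omega⟩) (f i)
    else bq.ot (f ⟨(j : ℕ) + 1, by have := j.isLt; omega⟩) (f i)

/-- The twisted tuple `([x,y₁,y_i], …, [x,y_{i-1},y_i], [x,y_i,y_{i+1}], …, [x,y_i,y_n])`
appearing in the local biquandle boundary. -/
def lbTwist {X : Type*} (tb : X → X → X → X) {n : ℕ} (x : X) (f : Fin n → X) (i : Fin n) :
    Fin (n - 1) → X :=
  fun j =>
    if h : (j : ℕ) < (i : ℕ) then tb x (f ⟨j, by have := i.isLt; omega⟩) (f i)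
    else tb x (f i) (f ⟨(j : ℕ) + 1, by have := j.isLt; omega⟩)

/-- The shadow biquandle boundary
`∂_n^sb(x,a₁,…,a_n) = Σ_i (-1)^i [(x,a₁,…,â_i,…,a_n) - (x*a_i, a₁⊲a_i,…,a_{i-1}⊲a_i,
a_{i+1}⊲'a_i,…,a_n⊲'a_i)]` on the free abelian group on `X × Bⁿ`. -/
noncomputable def sbBoundary {B X : Type*} (bq : Biquandle B) (bs : BSet bq X) (n : ℕ) :
    FreeAbelianGroup (X × (Fin n → B)) →+ FreeAbelianGroup (X × (Fin (n - 1) → B)) :=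
  FreeAbelianGroup.lift fun p =>
    ∑ i : Fin n, ((-1 : ℤ) ^ ((i : ℕ) + 1)) •
      (FreeAbelianGroup.of (p.1, delTuple i p.2)
        - FreeAbelianGroup.of (bs.act p.1 (p.2 i), sbTwist bq p.2 i))

/-- The local biquandle boundary
`∂_n^lb(x,y₁,…,y_n) = Σ_i (-1)^i [(x,y₁,…,ŷ_i,…,y_n) - (y_i, [x,y₁,y_i],…,[x,y_{i-1},y_i],
[x,y_i,y_{i+1}],…,[x,y_i,y_n])]` on the free abelian group on `X × Xⁿ`. -/
noncomputable def lbBoundary {X : Type*} (tb : X → X → X → X) (n : ℕ) :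
    FreeAbelianGroup (X × (Fin n → X)) →+ FreeAbelianGroup (X × (Fin (n - 1) → X)) :=
  FreeAbelianGroup.lift fun p =>
    ∑ i : Fin n, ((-1 : ℤ) ^ ((i : ℕ) + 1)) •
      (FreeAbelianGroup.of (p.1, delTuple i p.2)
        - FreeAbelianGroup.of (p.2 i, lbTwist tb p.1 p.2 i))

/-- The homomorphism `μ_n` induced on free abelian groups by
`μ_n(x,a₁,…,a_n) = (x, x*a₁, …, x*a_n)`. -/
noncomputable def muHom {B X : Type*} {bq : Biquandle B} (bs : BSet bq X) (n : ℕ) :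
    FreeAbelianGroup (X × (Fin n → B)) →+ FreeAbelianGroup (X × (Fin n → X)) :=
  FreeAbelianGroup.lift fun p =>
    FreeAbelianGroup.of (p.1, fun i => bs.act p.1 (p.2 i))

/-!
Since `x ↘ (x*a) = a`, the tribracket on points of the form `x*a` is
`[x, x*a, x*b] = (x*a)*(b⊲'a)`. So `μ` carries the `i`-th twisted face `(x*a_i, sbTwist)` to
`(x*a_i, lbTwist)`: the entries after position `i` agree on the nose, and those before it agree
by the `B`-set axiom `(x*a_j)*(a_i⊲'a_j) = (x*a_i)*(a_j⊲a_i)`. The deleted faces commute with `μ`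
because deletion commutes with applying a function entrywise.
-/

namespace BSet

variable {B X : Type*} {bq : Biquandle B} (bs : BSet bq X) (h : bs.StronglyConnected)

lemma sd_act (x : X) (a : B) : bs.sd h x (bs.act x a) = a :=
  (Equiv.ofBijective _ (h x)).symm_apply_apply a

lemma tribr_act_act (x : X) (a b : B) :
    bs.tribr h x (bs.act x a) (bs.act x b) = bs.act (bs.act x a) (bq.ot b a) := by
  rw [tribr, sd_act, sd_act]

lemma lbTwist_tribr_act {n : ℕ} (x : X) (a : Fin n → B) (i : Fin n) :
    lbTwist (bs.tribr h) x (fun k => bs.act x (a k)) i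
      = fun j => bs.act (bs.act x (a i)) (sbTwist bq a i j) := by
  funext j
  simp only [lbTwist, sbTwist]
  split
  · rw [tribr_act_act, bs.compat]
  · rw [tribr_act_act]

end BSet

lemma delTuple_map {α β : Type*} {n : ℕ} (φ : α → β) (i : Fin n) (f : Fin n → α) :
    delTuple i (fun k => φ (f k)) = fun j => φ (delTuple i f j) := by
  funext j
  simp only [delTuple]
  split <;> rfl

theorem muHom_chain_map_general {B X : Type*} (bq : Biquandle B) (bs : BSet bq X)
    (h : bs.StronglyConnected) (n : ℕ) :
    (muHom bs (n - 1)).comp (sbBoundary bq bs n)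
      = (lbBoundary (bs.tribr h) n).comp (muHom bs n) := by
  ext ⟨x, a⟩
  simp only [AddMonoidHom.comp_apply, sbBoundary, muHom, lbBoundary,
    FreeAbelianGroup.lift_apply_of, map_sum, map_zsmul, map_sub]
  rw [funext (bs.lbTwist_tribr_act h x a)]
  simp only [delTuple_map]

/-- Part of Lemma 4.3: `μ` is a chain map, i.e. `μ_{n-1} ∘ ∂_n^sb = ∂_n^lb ∘ μ_n` for
`n ≥ 2`, where `∂^lb` is taken for the corresponding horizontal-tribracket
`[x,y,z] = y*((x↘z) ⊲' (x↘y))` of a shadow biquandle with strongly connected `X`. -/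
theorem muHom_chain_map {B X : Type*} (bq : Biquandle B) (bs : BSet bq X)
    (h : bs.StronglyConnected) (n : ℕ) (hn : 2 ≤ n) :
    (muHom bs (n - 1)).comp (sbBoundary bq bs n)
      = (lbBoundary (bs.tribr h) n).comp (muHom bs n) :=
  muHom_chain_map_general bq bs h n
end

section
/- Let n be a positive integer, J an ideal of the Laurent polynomial ring (ℤ/nℤ)[t^{±1}], and Q = X = (ℤ/nℤ)[t^{±1}]/J, with t denoting the image of the Laurent variable; let a⊲b = ta+(1−t)b be the Alexander quandle operation, regarded as a biquandle with a⊲'b = a, and let x*a = tx+(1−t)a, so that (Q,X) is a shadow quandle. Assume 1−t is a unit in Q, so that X is strongly connected with x↘y = (1−t)⁻¹(−tx+y). Then the corresponding horizontal-tribracket [x,y,z] = y*((x↘z) ⊲' (x↘y)) satisfies [x,y,z] = −tx+ty+z for all x,y,z∈X. -/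
namespace BSet

theorem sd_eq_of_act_eq {B X : Type*} {bq : Biquandle B} (bs : BSet bq X)
    (h : bs.StronglyConnected) {x y : X} {a : B} (hxa : bs.act x a = y) :
    bs.sd h x y = a := by
  rw [← hxa]
  exact (Equiv.ofBijective _ (h x)).symm_apply_apply a

section Affine

variable {R : Type*} [CommRing R] {bq : Biquandle R} (bs : BSet bq R) {t : R}

theorem act_unit_inv_mul_of_affine (hact : ∀ x a, bs.act x a = t * x + (1 - t) * a)
    (hu : IsUnit (1 - t)) (x y : R) :
    bs.act x (↑hu.unit⁻¹ * (-(t * x) + y)) = y := by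
  rw [hact, ← mul_assoc (1 - t), hu.mul_val_inv, one_mul]
  ring

theorem stronglyConnected_of_affine (hact : ∀ x a, bs.act x a = t * x + (1 - t) * a)
    (hu : IsUnit (1 - t)) : bs.StronglyConnected := fun x =>
  ⟨fun a b hab => by
    simp only [hact] at hab
    exact hu.mul_left_cancel (add_left_cancel hab),
   fun y => ⟨_, bs.act_unit_inv_mul_of_affine hact hu x y⟩⟩

theorem sd_eq_of_affine (hact : ∀ x a, bs.act x a = t * x + (1 - t) * a)
    (hu : IsUnit (1 - t)) (h : bs.StronglyConnected) (x y : R) :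
    bs.sd h x y = ↑hu.unit⁻¹ * (-(t * x) + y) :=
  bs.sd_eq_of_act_eq h (bs.act_unit_inv_mul_of_affine hact hu x y)

theorem tribr_eq_of_affine (hot : ∀ a b, bq.ot a b = a)
    (hact : ∀ x a, bs.act x a = t * x + (1 - t) * a) (hu : IsUnit (1 - t))
    (h : bs.StronglyConnected) (x y z : R) :
    bs.tribr h x y z = -t * x + t * y + z := by
  rw [tribr, hot, bs.sd_eq_of_affine hact hu, hact, ← mul_assoc (1 - t), hu.mul_val_inv, one_mul]
  ring

end Affine

end BSet

theorem alexander_corresponding_tribracket_general (n : ℕ)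
    (J : Ideal (LaurentPolynomial (ZMod n)))
    (t : LaurentPolynomial (ZMod n) ⧸ J)
    (bq : Biquandle (LaurentPolynomial (ZMod n) ⧸ J))
    (bs : BSet bq (LaurentPolynomial (ZMod n) ⧸ J))
    (hot : ∀ a b, bq.ot a b = a)
    (hact : ∀ x a, bs.act x a = t * x + (1 - t) * a)
    (hu : IsUnit (1 - t)) :
    ∃ hsc : bs.StronglyConnected,
      (∀ x y, bs.sd hsc x y
          = (↑hu.unit⁻¹ : LaurentPolynomial (ZMod n) ⧸ J) * (-(t * x) + y)) ∧
      (∀ x y z, bs.tribr hsc x y z = -t * x + t * y + z) := by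
  let hsc := bs.stronglyConnected_of_affine hact hu
  exact ⟨hsc, bs.sd_eq_of_affine hact hu hsc, bs.tribr_eq_of_affine hot hact hu hsc⟩

/-- Example 5.4: let `n` be a positive integer, `J` an ideal of `(ℤ/nℤ)[t^{±1}]`, and
`Q = X = (ℤ/nℤ)[t^{±1}]/J` with the Alexander quandle operation `a⊲b = ta+(1-t)b`
(regarded as a biquandle with `a⊲'b = a`) and `x*a = tx+(1-t)a`, so that `(Q,X)` is a
shadow quandle.  If `1-t` is a unit in `Q`, then `X` is strongly connected with
`x↘y = (1-t)⁻¹(-tx+y)`, and the corresponding horizontal-tribracket satisfies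
`[x,y,z] = -tx+ty+z`. -/
theorem alexander_corresponding_tribracket (n : ℕ) (hn : 0 < n)
    (J : Ideal (LaurentPolynomial (ZMod n)))
    (t : LaurentPolynomial (ZMod n) ⧸ J)
    (ht : t = Ideal.Quotient.mk J (LaurentPolynomial.T 1))
    (bq : Biquandle (LaurentPolynomial (ZMod n) ⧸ J))
    (bs : BSet bq (LaurentPolynomial (ZMod n) ⧸ J))
    (hut : ∀ a b, bq.ut a b = t * a + (1 - t) * b)
    (hot : ∀ a b, bq.ot a b = a)
    (hact : ∀ x a, bs.act x a = t * x + (1 - t) * a)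
    (hu : IsUnit (1 - t)) :
    ∃ hsc : bs.StronglyConnected,
      (∀ x y, bs.sd hsc x y
          = (↑hu.unit⁻¹ : LaurentPolynomial (ZMod n) ⧸ J) * (-(t * x) + y)) ∧
      (∀ x y z, bs.tribr hsc x y z = -t * x + t * y + z) :=
  alexander_corresponding_tribracket_general n J t bq bs hot hact hu
end
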